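/- arXiv:0707.2119 — 8 statements merged into one kernel-verified Lean document; each statement's English description precedes it below -/
import Mathlib

section
/- For all integers m ≥ 0 and 0 ≤ l ≤ m, the quantity A_{l,m} = (l! · m! / 2^{m-l}) · Σ_{k=l}^{m} 2^k · C(2m-2k, m-k) · C(m+k, m) · C(k, l) is a positive integer. -/
open Finset

noncomputable def A (l m : ℕ) : ℚ :=
  ((l.factorial * m.factorial : ℕ) : ℚ) / 2 ^ (m - l) *
    ∑ k ∈ Finset.Icc l m,
      (2 : ℚ) ^ k * ((2 * m - 2 * k).choose (m - k)) * ((m + k).choose m) * (k.choose l)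

/-!
Write `s = m - k`. Since `s! * C(2s, s) = (s+1)(s+2)⋯(2s) = 2^s (2s-1)‼`, the product
`m! * C(2s, s)` equals `2^s * m(m-1)⋯(k+1) * (2s-1)‼`. The factor `2^s` combines with `2^k`
into `2^m = 2^l * 2^(m-l)`, which cancels the denominator, so every summand becomes a positive
integer.
-/

namespace Nat

theorem factorial_mul_centralBinom (s : ℕ) : s ! * centralBinom s = 2 ^ s * (2 * s - 1)‼ := by
  induction s with
  | zero => rfl
  | succ s ih =>
    have hodd : (2 * (s + 1) - 1)‼ = (2 * s + 1) * (2 * s - 1)‼ := by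
      rw [show 2 * (s + 1) - 1 = 2 * s + 1 by omega, doubleFactorial_add_one]
    calc (s + 1)! * centralBinom (s + 1)
        = s ! * ((s + 1) * centralBinom (s + 1)) := by rw [factorial_succ]; ring
      _ = 2 * (2 * s + 1) * (s ! * centralBinom s) := by rw [succ_mul_centralBinom_succ]; ring
      _ = 2 ^ (s + 1) * (2 * (s + 1) - 1)‼ := by rw [ih, hodd]; ring

theorem factorial_mul_centralBinom_sub {m k : ℕ} (hkm : k ≤ m) :
    m ! * centralBinom (m - k) = 2 ^ (m - k) * (m.descFactorial k * (2 * (m - k) - 1)‼) := by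
  rw [← factorial_mul_descFactorial hkm, mul_right_comm, factorial_mul_centralBinom]
  ring

end Nat

open Nat

def ATerm (l m k : ℕ) : ℕ :=
  2 ^ l * l ! * m.descFactorial k * (2 * (m - k) - 1)‼ * (m + k).choose m * k.choose l

theorem ATerm_pos {l m k : ℕ} (hlk : l ≤ k) (hkm : k ≤ m) : 0 < ATerm l m k := by
  have := descFactorial_pos.mpr hkm
  have := choose_pos hlk
  have := choose_pos (le_add_right m k)
  unfold ATerm
  positivity

theorem A_eq_sum_ATerm {l m : ℕ} (hlm : l ≤ m) : A l m = ∑ k ∈ Icc l m, (ATerm l m k : ℚ) := by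
  rw [A, mul_sum]
  refine sum_congr rfl fun k hk => ?_
  have hkm := (mem_Icc.mp hk).2
  have hchoose : (m ! : ℚ) * ((2 * m - 2 * k).choose (m - k) : ℕ)
      = 2 ^ (m - k) * ((m.descFactorial k : ℕ) * ((2 * (m - k) - 1)‼ : ℕ)) := by
    rw [show 2 * m - 2 * k = 2 * (m - k) by omega, ← centralBinom_eq_two_mul_choose]
    exact_mod_cast factorial_mul_centralBinom_sub hkm
  have hpow : (2 : ℚ) ^ k * 2 ^ (m - k) = 2 ^ l * 2 ^ (m - l) := by
    rw [← pow_add, ← pow_add, Nat.add_sub_cancel' hkm, Nat.add_sub_cancel' hlm]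
  rw [ATerm, div_mul_eq_mul_div, div_eq_iff (by positivity)]
  push_cast
  linear_combination (2 ^ k * l ! * ((m + k).choose m) * (k.choose l) : ℚ) * hchoose
    + (l ! * m.descFactorial k * (2 * (m - k) - 1)‼ * ((m + k).choose m) * (k.choose l) : ℚ) * hpow

theorem A_pos_integer (m l : ℕ) (h : l ≤ m) : ∃ n : ℕ, 0 < n ∧ A l m = n :=
  ⟨∑ k ∈ Icc l m, ATerm l m k,
    sum_pos (fun k hk => ATerm_pos (mem_Icc.mp hk).1 (mem_Icc.mp hk).2) (nonempty_Icc.mpr h),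
    by rw [A_eq_sum_ATerm h, Nat.cast_sum]⟩
end

section
/- For all m ≥ 1, A_{m-1,m} = 2^{m-1} · (2m-1)! · (2m+1). -/
open Finset

/- The sum has only the two terms k = n, n + 1, and `(i + j).choose j * i ! * j ! = (i + j)!`
turns each of them into a single factorial. -/
open Nat in
theorem A_self_succ (n : ℕ) :
    A n (n + 1) = 2 ^ n * ((n + (n + 1))! + (n + 1 + (n + 1))! : ℕ) := by
  rw [A, sum_Icc_succ_top n.le_succ, Icc_self, sum_singleton, Nat.add_sub_cancel_left,
    show 2 * (n + 1) - 2 * n = 2 by omega, Nat.sub_self, Nat.sub_self, Nat.choose_self,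
    Nat.choose_self, Nat.choose_one_right, Nat.choose_succ_self_right, Nat.add_comm (n + 1) n,
    ← add_choose_mul_factorial_mul_factorial n (n + 1),
    ← add_choose_mul_factorial_mul_factorial (n + 1) (n + 1), Nat.factorial_succ n]
  push_cast
  ring

theorem A_m1m (m : ℕ) (h : 1 ≤ m) :
    A (m - 1) m = 2 ^ (m - 1) * (2 * m - 1).factorial * (2 * m + 1) := by
  obtain ⟨n, rfl⟩ : ∃ n, m = n + 1 := ⟨m - 1, by omega⟩
  rw [Nat.add_sub_cancel, A_self_succ, show n + 1 + (n + 1) = n + (n + 1) + 1 by omega,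
    Nat.factorial_succ (n + (n + 1)), show 2 * (n + 1) - 1 = n + (n + 1) by omega]
  push_cast
  ring
end

section
/- For all m ≥ 0, A_{0,m} = ∏_{k=1}^{m} (4k-1). In particular A_{0,m} is odd. -/
open Finset

/-!
Write `A 0 m = m! / 2^m * S m` with `S m = ∑ₖ 2^k C(2m-2k, m-k) C(m+k, m)`. The sum satisfies
`(m + 1) S (m + 1) = 2 (4m + 3) S m`, which is found by Zeilberger's algorithm: the summands `F m k`
and the certificate `G m k = 2^k C(2m+2-2k, m+1-k) C(m+k, m+1)` form a WZ pair,
`(m + 1) F (m + 1) k - (8m + 6) F m k = 2 (m + 1) (G m k - G m (k + 1))`, and summing over `k`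
telescopes. Hence `m! S m = 2^m ∏ (4k - 1)`, a product of odd numbers.
-/

theorem Finset.sum_range_add_eq_of_telescoping {M : Type*} [AddCommMonoid M]
    (f g G : ℕ → M) (n : ℕ) (h : ∀ k < n, f k + G (k + 1) = g k + G k) :
    ∑ k ∈ range n, f k + G n = ∑ k ∈ range n, g k + G 0 := by
  induction n with
  | zero => simp
  | succ n ih =>
    rw [sum_range_succ, sum_range_succ, add_assoc, h n n.lt_succ_self, add_left_comm,
      ih fun k hk => h k (hk.trans n.lt_succ_self)]
    abel

namespace AZero

def summand (m k : ℕ) : ℕ :=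
  2 ^ k * Nat.centralBinom (m - k) * (m + k).choose m

def binomSum (m : ℕ) : ℕ :=
  ∑ k ∈ range (m + 1), summand m k

def certificate (m k : ℕ) : ℕ :=
  2 ^ k * Nat.centralBinom (m + 1 - k) * (m + k).choose (m + 1)

theorem summand_wz {m k : ℕ} (hk : k ≤ m) :
    (m + 1) * summand (m + 1) k + 2 * (m + 1) * certificate m (k + 1) =
      (8 * m + 6) * summand m k + 2 * (m + 1) * certificate m k := by
  obtain ⟨a, rfl⟩ : ∃ a, m = a + k := ⟨m - k, by omega⟩
  have hcentral : (a + 1) * Nat.centralBinom (a + 1) = 2 * (2 * a + 1) * Nat.centralBinom a :=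
    Nat.succ_mul_centralBinom_succ a
  have hratio : (a + k + k).choose (a + k + 1) * (a + k + 1) = (a + k + k).choose (a + k) * k := by
    simpa using Nat.choose_succ_right_eq (a + k + k) (a + k)
  have hpascal : (a + k + k + 1).choose (a + k + 1) =
      (a + k + k).choose (a + k) + (a + k + k).choose (a + k + 1) :=
    Nat.choose_succ_succ' _ _
  simp only [summand, certificate, show a + k + 1 - k = a + 1 by omega,
    show a + k + 1 - (k + 1) = a by omega, Nat.add_sub_cancel,
    show a + k + 1 + k = a + k + k + 1 by omega, show a + k + (k + 1) = a + k + k + 1 by omega]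
  -- `hcentral` only determines `(a + 1) * centralBinom (a + 1)`, so prove `(a + 1) * _ = (a + 1) * _`.
  refine Nat.eq_of_mul_eq_mul_left a.succ_pos ?_
  rw [hpascal]
  zify at hcentral hratio ⊢
  linear_combination
    (2 ^ k * (a + k + 1) * ((a + k + k).choose (a + k) - (a + k + k).choose (a + k + 1)) : ℤ) *
      hcentral + (2 ^ (k + 1) * a.centralBinom : ℤ) * hratio

theorem certificate_zero (m : ℕ) : certificate m 0 = 0 := by
  simp [certificate]

theorem summand_self_succ (m : ℕ) : summand (m + 1) (m + 1) = 2 * certificate m (m + 1) := by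
  have hcentral : (2 * m + 1 + 1).choose (m + 1) = 2 * (2 * m + 1).choose (m + 1) := by
    rw [Nat.choose_succ_succ', ← Nat.choose_symm_half, ← two_mul]
  simp only [summand, certificate, Nat.sub_self, Nat.centralBinom_zero,
    show m + 1 + (m + 1) = 2 * m + 1 + 1 by ring, show m + (m + 1) = 2 * m + 1 by ring, hcentral]
  ring

theorem binomSum_succ (m : ℕ) : (m + 1) * binomSum (m + 1) = (8 * m + 6) * binomSum m := by
  have htel := sum_range_add_eq_of_telescoping (fun k ↦ (m + 1) * summand (m + 1) k)
    (fun k ↦ (8 * m + 6) * summand m k) (fun k ↦ 2 * (m + 1) * certificate m k) (m + 1)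
    fun k hk ↦ summand_wz (Nat.lt_succ_iff.mp hk)
  simp only [certificate_zero, mul_zero, add_zero, ← mul_sum] at htel
  rw [binomSum, sum_range_succ, mul_add, summand_self_succ, binomSum, ← htel]
  ring

theorem factorial_mul_binomSum (m : ℕ) :
    m.factorial * binomSum m = 2 ^ m * ∏ k ∈ Icc 1 m, (4 * k - 1) := by
  induction m with
  | zero => simp [binomSum, summand]
  | succ n ih =>
    calc (n + 1).factorial * binomSum (n + 1)
        = n.factorial * ((n + 1) * binomSum (n + 1)) := by rw [Nat.factorial_succ]; ring
      _ = 2 * (4 * n + 3) * (n.factorial * binomSum n) := by rw [binomSum_succ]; ring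
      _ = 2 ^ (n + 1) * ∏ k ∈ Icc 1 (n + 1), (4 * k - 1) := by
        rw [ih, prod_Icc_succ_top (by omega), show 4 * (n + 1) - 1 = 4 * n + 3 by omega]
        ring

theorem A_zero_left_eq (m : ℕ) : A 0 m = m.factorial / 2 ^ m * binomSum m := by
  simp only [A, binomSum, summand, ← Nat.range_succ_eq_Icc_zero, Nat.choose_zero_right,
    Nat.centralBinom_eq_two_mul_choose, Nat.mul_sub, Nat.factorial_zero, one_mul, Nat.sub_zero]
  push_cast
  simp

end AZero

open AZero in
theorem A_zero (m : ℕ) :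
    A 0 m = ((∏ k ∈ Finset.Icc 1 m, (4 * k - 1) : ℕ) : ℚ) ∧
      Odd (∏ k ∈ Finset.Icc 1 m, (4 * k - 1)) := by
  refine ⟨?_, ?_⟩
  · have h : (m.factorial * binomSum m : ℚ) =
        2 ^ m * ((∏ k ∈ Icc 1 m, (4 * k - 1) : ℕ) : ℚ) := by
      exact_mod_cast factorial_mul_binomSum m
    rw [A_zero_left_eq, div_mul_eq_mul_div, h, mul_div_cancel_left₀ _ (by positivity)]
  · refine prod_induction _ Odd (fun _ _ ↦ Odd.mul) odd_one fun k hk ↦ ⟨2 * k - 1, ?_⟩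
    have := (mem_Icc.mp hk).1
    omega
end

section
/- For all m ≥ 1, A_{1,m} = (2m+1) ∏_{k=1}^{m}(4k-1) − ∏_{k=1}^{m}(4k+1). -/
open Finset

/-!
Write `F m k = 2^k C(2(m-k), m-k) C(m+k, m)` (`A.term`), so that
`A 1 m = m! / 2^(m-1) * ∑ k, k F m k`.
Ratios of binomial coefficients give the recurrence
`(m+1) F (m+1) (k+1) = 2(2m-1-2k) F m (k+1) + 4(m+k+1) F m k`, which, summed against an
arbitrary weight `p`, expresses `∑ p k F (m+1) k` through `∑ q k F m k` for an explicit `q`.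
For `p = 1` and `p = k` this closes up to the first-order system
`(m+1) S₀(m+1) = 2(4m+3) S₀(m)`, `(m+1) S₁(m+1) = 2(4m+5) S₁(m) + 4(m+1) S₀(m)`,
whose solution is given by the two products.
-/

namespace Nat

variable {K : Type*} [Field K] [CharZero K]

lemma cast_centralBinom_succ (n : ℕ) :
    ((n + 1).centralBinom : K) = 2 * (2 * n + 1) / (n + 1) * n.centralBinom := by
  rw [div_mul_eq_mul_div, eq_div_iff (Nat.cast_add_one_ne_zero n), mul_comm]
  exact_mod_cast Nat.succ_mul_centralBinom_succ n

lemma cast_choose_succ_add_left (m k : ℕ) :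
    ((m + 1 + k).choose (m + 1) : K) = (m + k + 1) / (m + 1) * (m + k).choose m := by
  rw [div_mul_eq_mul_div, eq_div_iff (Nat.cast_add_one_ne_zero m),
    show m + 1 + k = m + k + 1 by omega]
  exact_mod_cast (Nat.add_one_mul_choose_eq (m + k) m).symm

lemma cast_choose_add_succ_right (m k : ℕ) :
    ((m + (k + 1)).choose m : K) = (m + k + 1) / (k + 1) * (m + k).choose m := by
  rw [div_mul_eq_mul_div, eq_div_iff (Nat.cast_add_one_ne_zero k)]
  have h := Nat.choose_mul_succ_eq (m + k) m
  rw [show m + k + 1 - m = k + 1 by omega] at h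
  rw [← add_assoc, mul_comm _ ((m + k).choose m : K)]
  exact_mod_cast h.symm

end Nat

namespace A

noncomputable def term (m k : ℕ) : ℚ :=
  2 ^ k * (m - k).centralBinom * (m + k).choose m

lemma succ_mul_term_succ_zero (m : ℕ) :
    (m + 1 : ℚ) * term (m + 1) 0 = 2 * (2 * m + 1) * term m 0 := by
  simp only [term, pow_zero, Nat.sub_zero, add_zero, Nat.choose_self, one_mul, Nat.cast_one,
    mul_one, Nat.cast_centralBinom_succ]
  field_simp

lemma succ_mul_term_succ_self (m : ℕ) :
    (m + 1 : ℚ) * term (m + 1) (m + 1) = 4 * (2 * m + 1) * term m m := by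
  simp only [term, Nat.sub_self, Nat.cast_choose_succ_add_left, Nat.cast_choose_add_succ_right]
  push_cast
  field_simp
  ring

lemma succ_mul_term_succ_succ {m k : ℕ} (hk : k < m) :
    (m + 1 : ℚ) * term (m + 1) (k + 1)
      = 2 * (2 * m - 1 - 2 * k) * term m (k + 1) + 4 * (m + k + 1) * term m k := by
  obtain ⟨j, rfl⟩ := Nat.exists_eq_add_of_lt hk
  simp only [term, Nat.cast_choose_succ_add_left, Nat.cast_choose_add_succ_right,
    show k + j + 1 + 1 - (k + 1) = j + 1 by omega, show k + j + 1 - (k + 1) = j by omega,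
    show k + j + 1 - k = j + 1 by omega, Nat.cast_centralBinom_succ]
  push_cast
  field_simp
  ring

noncomputable def weightedSum (p : ℕ → ℚ) (m : ℕ) : ℚ :=
  ∑ k ∈ range (m + 1), p k * term m k

lemma succ_mul_weightedSum_succ (p : ℕ → ℚ) (m : ℕ) :
    (m + 1 : ℚ) * weightedSum p (m + 1)
      = weightedSum (fun k => 2 * (2 * m + 1 - 2 * k) * p k + 4 * (m + k + 1) * p (k + 1)) m := by
  have hlow : ∑ k ∈ range (m + 1), 2 * (2 * m + 1 - 2 * k) * p k * term m k
      = ∑ k ∈ range m, 2 * (2 * m - 1 - 2 * k) * p (k + 1) * term m (k + 1)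
        + 2 * (2 * m + 1) * p 0 * term m 0 := by
    rw [sum_range_succ']
    congr 1
    · refine sum_congr rfl fun k _ => ?_
      push_cast
      ring
    · simp
  have hhigh : ∑ k ∈ range (m + 1), 4 * (m + k + 1) * p (k + 1) * term m k
      = ∑ k ∈ range m, 4 * (m + k + 1) * p (k + 1) * term m k
        + 4 * (2 * m + 1) * p (m + 1) * term m m := by
    rw [sum_range_succ]
    ring
  have hrec : ∑ k ∈ range m, p (k + 1) * ((m + 1) * term (m + 1) (k + 1))
      = ∑ k ∈ range m, (2 * (2 * m - 1 - 2 * k) * p (k + 1) * term m (k + 1)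
        + 4 * (m + k + 1) * p (k + 1) * term m k) := by
    refine sum_congr rfl fun k hk => ?_
    rw [succ_mul_term_succ_succ (mem_range.mp hk)]
    ring
  have hsplit : (m + 1 : ℚ) * weightedSum p (m + 1)
      = ∑ k ∈ range m, p (k + 1) * ((m + 1) * term (m + 1) (k + 1))
        + p (m + 1) * ((m + 1) * term (m + 1) (m + 1)) + p 0 * ((m + 1) * term (m + 1) 0) := by
    rw [weightedSum, mul_sum, sum_range_succ', sum_range_succ]
    simp only [mul_left_comm (m + 1 : ℚ)]
  rw [hsplit, hrec, succ_mul_term_succ_self, succ_mul_term_succ_zero, weightedSum]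
  simp only [add_mul, sum_add_distrib, hlow, hhigh]
  ring

lemma succ_mul_weightedSum_one_succ (m : ℕ) :
    (m + 1 : ℚ) * weightedSum 1 (m + 1) = 2 * (4 * m + 3) * weightedSum 1 m := by
  rw [succ_mul_weightedSum_succ, weightedSum, weightedSum, mul_sum]
  exact sum_congr rfl fun k _ => by simp only [Pi.one_apply]; ring

lemma succ_mul_weightedSum_cast_succ (m : ℕ) :
    (m + 1 : ℚ) * weightedSum Nat.cast (m + 1)
      = 2 * (4 * m + 5) * weightedSum Nat.cast m + 4 * (m + 1) * weightedSum 1 m := by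
  rw [succ_mul_weightedSum_succ, weightedSum, weightedSum, weightedSum, mul_sum, mul_sum,
    ← sum_add_distrib]
  exact sum_congr rfl fun k _ => by simp only [Pi.one_apply]; push_cast; ring

lemma factorial_mul_weightedSum_one (m : ℕ) :
    (m.factorial : ℚ) * weightedSum 1 m = 2 ^ m * ∏ k ∈ Icc 1 m, (4 * (k : ℚ) - 1) := by
  induction m with
  | zero => simp [weightedSum, term]
  | succ m ih =>
    rw [Nat.factorial_succ, prod_Icc_succ_top (Nat.le_add_left 1 m)]
    push_cast
    linear_combination (m.factorial : ℚ) * succ_mul_weightedSum_one_succ m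
      + 2 * (4 * (m : ℚ) + 3) * ih

lemma two_mul_factorial_mul_weightedSum_cast (m : ℕ) :
    2 * (m.factorial : ℚ) * weightedSum Nat.cast m
      = 2 ^ m * ((2 * m + 1) * ∏ k ∈ Icc 1 m, (4 * (k : ℚ) - 1)
          - ∏ k ∈ Icc 1 m, (4 * (k : ℚ) + 1)) := by
  induction m with
  | zero => simp [weightedSum]
  | succ m ih =>
    rw [Nat.factorial_succ, prod_Icc_succ_top (Nat.le_add_left 1 m),
      prod_Icc_succ_top (Nat.le_add_left 1 m)]
    push_cast
    linear_combination 2 * (m.factorial : ℚ) * succ_mul_weightedSum_cast_succ m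
      + 2 * (4 * (m : ℚ) + 5) * ih + 8 * ((m : ℚ) + 1) * factorial_mul_weightedSum_one m

lemma sum_Icc_one_eq_weightedSum_cast (m : ℕ) :
    ∑ k ∈ Icc 1 m,
      (2 : ℚ) ^ k * ((2 * m - 2 * k).choose (m - k)) * ((m + k).choose m) * (k.choose 1)
      = weightedSum Nat.cast m := by
  rw [weightedSum, range_eq_Ico, sum_eq_sum_Ico_succ_bot (by omega : 0 < m + 1),
    zero_add, Ico_add_one_right_eq_Icc, Nat.cast_zero, zero_mul, zero_add]
  refine sum_congr rfl fun k _ => ?_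
  rw [term, Nat.choose_one_right, ← Nat.mul_sub_left_distrib,
    ← Nat.centralBinom_eq_two_mul_choose]
  ring

end A

open A in
theorem A_one (m : ℕ) (h : 1 ≤ m) :
    A 1 m = (2 * m + 1) * ∏ k ∈ Finset.Icc 1 m, (4 * (k : ℚ) - 1)
      - ∏ k ∈ Finset.Icc 1 m, (4 * (k : ℚ) + 1) := by
  have hpow : (2 : ℚ) ^ (m - 1) = 2 ^ m / 2 := by
    rw [eq_div_iff two_ne_zero, ← pow_succ, Nat.sub_add_cancel h]
  rw [A, sum_Icc_one_eq_weightedSum_cast, Nat.factorial_one, one_mul, hpow]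
  field_simp
  linear_combination two_mul_factorial_mul_weightedSum_cast m
end

section
/- For all m ≥ 1, the 2-adic valuation of A_{1,m} equals ν₂(m(m+1)) + 1. -/
open Finset

/-! Since `C(2i, i) = 2^i (2i-1)‼ / i!` and `k C(m+k, m) = (m+1) C(m+k, m+1)`, the `k`-th summand
of `A_{1,m}` equals `2 (2(m-k)-1)‼ C(m+k, m+1) (m+1)!/(m-k)!`, an integer. For `k = 1` this is
`2 m (m+1)` times an odd number, while for `k ≥ 2` the falling factorial `(m+1)!/(m-k)!` is
`(m+1) m` times a product of `k-1` consecutive integers; that product is even when `k ≥ 3`, and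
for `k = 2` the factor `(m-1)` pairs with `C(m+2, m+1) = m+2` to give an even number. Hence
`A_{1,m} = 2 m (m+1) u` with `u` odd. -/

open Nat

lemma Nat.odd_doubleFactorial_two_mul_sub_one (n : ℕ) : Odd (2 * n - 1)‼ := by
  induction n with
  | zero => decide
  | succ n ih =>
    rcases n with _ | n
    · decide
    · rw [show 2 * (n + 2) - 1 = 2 * (n + 1) - 1 + 2 by omega, doubleFactorial_add_two]
      exact Nat.odd_mul.2 ⟨by rw [Nat.odd_iff]; omega, ih⟩

lemma Nat.choose_two_mul_mul_factorial (n : ℕ) :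
    (2 * n).choose n * n ! = 2 ^ n * (2 * n - 1)‼ := by
  have hfact : (2 * n)! = (2 * n)‼ * (2 * n - 1)‼ := by
    rcases n with _ | n
    · rfl
    · rw [show 2 * (n + 1) = 2 * n + 1 + 1 by ring, factorial_eq_mul_doubleFactorial]; rfl
  apply Nat.eq_of_mul_eq_mul_right (factorial_pos n)
  have := choose_mul_factorial_mul_factorial (show n ≤ 2 * n by omega)
  rw [show 2 * n - n = n by omega] at this
  rw [this, hfact, doubleFactorial_two_mul]
  ring

def termA1 (m k : ℕ) : ℕ :=
  (2 * (m - k) - 1)‼ * (m + k).choose (m + 1) * (m + 1).descFactorial (k + 1)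

lemma factorial_mul_summand_eq_two_pow_mul_termA1 (m k : ℕ) (hk : k ≤ m) :
    m ! * (2 ^ k * (2 * m - 2 * k).choose (m - k) * (m + k).choose m * k)
      = 2 ^ m * termA1 m k := by
  obtain ⟨i, rfl⟩ : ∃ i, m = i + k := ⟨m - k, by omega⟩
  rw [show 2 * (i + k) - 2 * k = 2 * i by omega, show i + k - k = i by omega]
  have hchoose :
      (i + k + k).choose (i + k) * k = (i + k + k).choose (i + k + 1) * (i + k + 1) := by
    rw [choose_succ_right_eq, show i + k + k - (i + k) = k by omega]
  have hdesc : i ! * (i + k + 1).descFactorial (k + 1) = (i + k + 1)! := by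
    simpa [show i + k + 1 - (k + 1) = i by omega] using
      factorial_mul_descFactorial (show k + 1 ≤ i + k + 1 by omega)
  apply Nat.eq_of_mul_eq_mul_left (factorial_pos i)
  calc i ! * ((i + k)! * (2 ^ k * (2 * i).choose i * (i + k + k).choose (i + k) * k))
      = (i + k)! * 2 ^ k * ((2 * i).choose i * i !) * ((i + k + k).choose (i + k) * k) := by ring
    _ = 2 ^ (i + k) * (2 * i - 1)‼ * (i + k + k).choose (i + k + 1)
          * ((i + k + 1) * (i + k)!) := by
        rw [choose_two_mul_mul_factorial, hchoose, pow_add]; ring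
    _ = i ! * (2 ^ (i + k) * termA1 (i + k) k) := by
        rw [← factorial_succ, ← hdesc, termA1, show i + k - k = i by omega]; ring

lemma A_one_eq_two_mul_sum_termA1 (m : ℕ) (hm : 1 ≤ m) :
    A 1 m = 2 * ∑ k ∈ Icc 1 m, (termA1 m k : ℚ) := by
  rw [A, mul_sum, mul_sum]
  refine sum_congr rfl fun k hk => ?_
  have h := congrArg (Nat.cast (R := ℚ))
    (factorial_mul_summand_eq_two_pow_mul_termA1 m k (mem_Icc.1 hk).2)
  push_cast at h
  rw [factorial_one, one_mul, choose_one_right, ← mul_div_right_comm, h,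
    ← pow_sub_one_mul (by omega : m ≠ 0)]
  field_simp

lemma termA1_one (m : ℕ) : termA1 m 1 = (2 * (m - 1) - 1)‼ * (m * (m + 1)) := by
  rw [termA1, choose_self, succ_descFactorial_succ, descFactorial_one]
  ring

lemma two_mul_mul_succ_dvd_termA1 (m k : ℕ) (hk : 2 ≤ k) : 2 * (m * (m + 1)) ∣ termA1 m k := by
  obtain ⟨j, rfl⟩ : ∃ j, k = j + 2 := ⟨k - 2, by omega⟩
  rcases m with _ | n
  · simp [termA1]
  have hdesc :
      (n + 1 + 1).descFactorial (j + 2 + 1) = (n + 1) * (n + 2) * n.descFactorial (j + 1) := by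
    rw [succ_descFactorial_succ, succ_descFactorial_succ]; ring
  have heven : 2 ∣ (n + 1 + (j + 2)).choose (n + 1 + 1) * n.descFactorial (j + 1) := by
    rcases j with _ | j
    · rw [show n + 1 + (0 + 2) = n + 2 + 1 by ring, choose_succ_self_right, descFactorial_one,
        ← even_iff_two_dvd, Nat.even_mul, Nat.even_iff, Nat.even_iff]
      omega
    · exact Dvd.dvd.mul_left ((Nat.dvd_factorial two_pos (by omega)).trans
        (factorial_dvd_descFactorial n (j + 1 + 1))) _
  rw [termA1, hdesc]
  obtain ⟨c, hc⟩ := heven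
  exact ⟨(2 * (n + 1 - (j + 2)) - 1)‼ * c,
    by linear_combination (2 * (n + 1 - (j + 2)) - 1)‼ * (n + 1) * (n + 2) * hc⟩

theorem val_A_one (m : ℕ) (h : 1 ≤ m) :
    padicValRat 2 (A 1 m) = (padicValNat 2 (m * (m + 1)) : ℤ) + 1 := by
  obtain ⟨w, hw⟩ : 2 * (m * (m + 1)) ∣ ∑ k ∈ Ioc 1 m, termA1 m k :=
    dvd_sum fun k hk => two_mul_mul_succ_dvd_termA1 m k (mem_Ioc.1 hk).1
  set u := (2 * (m - 1) - 1)‼ + 2 * w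
  have hu : Odd u := (odd_doubleFactorial_two_mul_sub_one _).add_even (even_two_mul w)
  have hA : A 1 m = ((2 * (m * (m + 1) * u) : ℕ) : ℚ) := by
    rw [A_one_eq_two_mul_sum_termA1 m h, ← add_sum_Ioc_eq_sum_Icc h]
    exact_mod_cast congrArg (2 * ·) (by rw [termA1_one m, hw]; ring)
  have : Fact (Nat.Prime 2) := ⟨Nat.prime_two⟩
  rw [hA, padicValRat.of_nat, padicValNat.mul two_ne_zero (by positivity),
    padicValNat.self one_lt_two, padicValNat.mul (by positivity) hu.pos.ne',
    padicValNat.eq_zero_of_not_dvd hu.not_two_dvd_nat]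
  push_cast
  ring
end

section
/- For all 0 ≤ l ≤ m, ν₂(A_{l,m}) = ν₂((m+1−l)·(m+2−l)⋯(m+l)) + l, i.e., ν₂(A_{l,m}) = ν₂((m+l)!/(m−l)!) + l. -/
open Finset

/-!
Write `v = ν₂`. Since `v((2n)!) = n + v(n!)`, the `k`-th summand `t k` of `A l m` satisfies
`v(t k) = m + v((m+k)!) - v(m!) - v(l!) - v((m-k)!) - v((k-l)!)`.
With `j = k - l`, the excess `v(t k) - v(t l)` is `v(j! · C(m+l+j, j) · C(m-l, j))`, which is
positive: for `j ≥ 2` because `2 ∣ j!`, and for `j = 1` because one of `m+l+1`, `m-l` is even.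
So the `k = l` summand alone determines `v` of the sum, and multiplying back by `l! m! / 2^(m-l)`
gives `v((m+l)!) - v((m-l)!) + l`.
-/

open Nat

section Valuation

variable {p : ℕ} [Fact p.Prime]

theorem padicValNat_factorial_add (a b : ℕ) :
    padicValNat p (a + b)! =
      padicValNat p ((a + b).choose a) + padicValNat p a ! + padicValNat p b ! := by
  have hchoose := (choose_pos (le_add_left b a)).ne'
  rw [choose_symm_add, ← add_choose_mul_factorial_mul_factorial,
    padicValNat.mul (mul_ne_zero hchoose (factorial_ne_zero a)) (factorial_ne_zero b),
    padicValNat.mul hchoose (factorial_ne_zero a)]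

theorem padicValNat_add_of_pow_succ_dvd {a b : ℕ} (ha : a ≠ 0)
    (hb : p ^ (padicValNat p a + 1) ∣ b) : padicValNat p (a + b) = padicValNat p a := by
  have hab : a + b ≠ 0 := by omega
  refine le_antisymm ?_ ((padicValNat_dvd_iff_le hab).mp
    (dvd_add pow_padicValNat_dvd ((pow_dvd_pow p (le_succ _)).trans hb)))
  by_contra! hlt
  have hdvd : p ^ (padicValNat p a + 1) ∣ a + b := (padicValNat_dvd_iff_le hab).mpr hlt
  exact pow_succ_padicValNat_not_dvd ha ((Nat.dvd_add_left hb).mp hdvd)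

theorem padicValNat_sum_eq_of_pow_succ_dvd {ι : Type*} [DecidableEq ι] {s : Finset ι}
    {f : ι → ℕ} {i : ι} (hi : i ∈ s) (hfi : f i ≠ 0)
    (hf : ∀ j ∈ s.erase i, p ^ (padicValNat p (f i) + 1) ∣ f j) :
    padicValNat p (∑ j ∈ s, f j) = padicValNat p (f i) := by
  rw [← add_sum_erase s f hi]
  exact padicValNat_add_of_pow_succ_dvd hfi (dvd_sum hf)

end Valuation

theorem padicValNat_two_centralBinom_add_factorial (n : ℕ) :
    padicValNat 2 n.centralBinom + padicValNat 2 n ! = n := by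
  have h := padicValNat_factorial_add (p := 2) n n
  rw [← two_mul, padicValNat_factorial_mul, ← centralBinom_eq_two_mul_choose] at h
  omega

theorem padicValNat_two_factorial_add_lt {a b j : ℕ} (hj : 0 < j) (hab : Even (a + b + j)) :
    padicValNat 2 a ! + padicValNat 2 b ! + padicValNat 2 j ! <
      padicValNat 2 (a + j)! + padicValNat 2 (b + j)! := by
  rw [padicValNat_factorial_add a j, padicValNat_factorial_add b j]
  suffices 0 < padicValNat 2 ((a + j).choose a) + padicValNat 2 ((b + j).choose b) +
      padicValNat 2 j ! by omega
  obtain rfl | hj2 : j = 1 ∨ 2 ≤ j := by omega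
  · have : 2 ∣ a + 1 ∨ 2 ∣ b + 1 := by grind
    rw [choose_succ_self_right, choose_succ_self_right]
    rcases this with h | h <;> have := one_le_padicValNat_of_dvd (add_one_ne_zero _) h <;> omega
  · have := one_le_padicValNat_of_dvd (factorial_ne_zero j) (dvd_factorial two_pos hj2)
    omega

def summand (l m k : ℕ) : ℕ :=
  2 ^ k * (2 * m - 2 * k).choose (m - k) * (m + k).choose m * k.choose l

theorem summand_ne_zero {l m k : ℕ} (hlk : l ≤ k) (hkm : k ≤ m) : summand l m k ≠ 0 := by
  have : m - k ≤ 2 * m - 2 * k := by omega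
  have := choose_pos this
  have := choose_pos (le_add_right m k)
  have := choose_pos hlk
  unfold summand
  positivity

theorem padicValNat_summand {l m k : ℕ} (hlk : l ≤ k) (hkm : k ≤ m) :
    padicValNat 2 (summand l m k) + padicValNat 2 m ! + padicValNat 2 l ! +
      padicValNat 2 (m - k)! + padicValNat 2 (k - l)! = m + padicValNat 2 (m + k)! := by
  have hcb := padicValNat_two_centralBinom_add_factorial (m - k)
  have hmk := padicValNat_factorial_add (p := 2) m k
  have hkl := padicValNat_factorial_add (p := 2) l (k - l)
  rw [Nat.add_sub_cancel' hlk] at hkl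
  rw [centralBinom_eq_two_mul_choose, Nat.mul_sub] at hcb
  have hne := summand_ne_zero hlk hkm
  unfold summand at hne ⊢
  rw [padicValNat.mul (by aesop) (by aesop), padicValNat.mul (by aesop) (by aesop),
    padicValNat.mul (by aesop) (by aesop), padicValNat.prime_pow]
  omega

theorem padicValNat_summand_self {l m : ℕ} (h : l ≤ m) :
    padicValNat 2 (summand l m l) + padicValNat 2 m ! + padicValNat 2 l ! +
      padicValNat 2 (m - l)! = m + padicValNat 2 (m + l)! := by
  simpa using padicValNat_summand le_rfl h

theorem padicValNat_summand_lt {l m k : ℕ} (hlk : l < k) (hkm : k ≤ m) :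
    padicValNat 2 (summand l m l) < padicValNat 2 (summand l m k) := by
  have hl := padicValNat_summand_self (hlk.le.trans hkm)
  have hk := padicValNat_summand hlk.le hkm
  have hlt := padicValNat_two_factorial_add_lt (a := m + l) (b := m - k) (j := k - l)
    (by omega) ⟨m, by omega⟩
  rw [show m + l + (k - l) = m + k by omega, show m - k + (k - l) = m - l by omega] at hlt
  omega

theorem padicValNat_sum_summand {l m : ℕ} (h : l ≤ m) :
    padicValNat 2 (∑ k ∈ Icc l m, summand l m k) = padicValNat 2 (summand l m l) := by
  refine padicValNat_sum_eq_of_pow_succ_dvd (mem_Icc.mpr ⟨le_rfl, h⟩) (summand_ne_zero le_rfl h)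
    fun k hk => (pow_dvd_pow 2 (padicValNat_summand_lt ?_ ?_)).trans pow_padicValNat_dvd
  all_goals grind

theorem A_eq (l m : ℕ) :
    A l m = ((l ! * m ! * ∑ k ∈ Icc l m, summand l m k : ℕ) : ℚ) / 2 ^ (m - l) := by
  simp only [A, summand]
  push_cast
  ring

theorem val_A (l m : ℕ) (h : l ≤ m) :
    padicValRat 2 (A l m) =
      (padicValNat 2 ((m + l).factorial / (m - l).factorial) : ℤ) + l := by
  have hsum : ∑ k ∈ Icc l m, summand l m k ≠ 0 :=
    (sum_pos (fun k hk => (summand_ne_zero (mem_Icc.mp hk).1 (mem_Icc.mp hk).2).bot_lt)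
      ⟨l, mem_Icc.mpr ⟨le_rfl, h⟩⟩).ne'
  have hN : l ! * m ! * ∑ k ∈ Icc l m, summand l m k ≠ 0 := by positivity
  have hquot : padicValNat 2 ((m + l)! / (m - l)!) + padicValNat 2 (m - l)! =
      padicValNat 2 (m + l)! := by
    have hdvd := factorial_dvd_factorial (show m - l ≤ m + l by omega)
    rw [← padicValNat.mul (Nat.div_pos (factorial_le (by omega)) (factorial_pos _)).ne'
      (factorial_ne_zero _), Nat.div_mul_cancel hdvd]
  have hself : padicValRat 2 2 = 1 := by exact_mod_cast padicValRat.self (p := 2) one_lt_two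
  rw [A_eq, padicValRat.div (by exact_mod_cast hN) (by positivity), padicValRat.of_nat,
    padicValRat.pow _, hself, mul_one, padicValNat.mul (by positivity) hsum,
    padicValNat.mul (by positivity) (by positivity), padicValNat_sum_summand h]
  have := padicValNat_summand_self h
  omega
end

section
/- Let T: ℕ → ℕ be the Collatz map T(i) = i/2 if i is even and T(i) = (3i+1)/2 if i is odd. For any m ≥ 1, let N = ν₂(m(m+1)). Then m, T(m), T²(m), …, T^{N−1}(m) all have the same parity as m, while T^N(m) has the opposite parity. That is, N is the first time the orbit of m under T changes parity. -/
def collatz (i : ℕ) : ℕ := if Even i then i / 2 else (3 * i + 1) / 2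

private lemma v2_mul (a b : ℕ) (ha : a ≠ 0) (hb : b ≠ 0) :
    padicValNat 2 (a * b) = padicValNat 2 a + padicValNat 2 b :=
  padicValNat.mul ha hb

private lemma v2_odd {a : ℕ} (h : a % 2 = 1) : padicValNat 2 a = 0 :=
  padicValNat.eq_zero_of_not_dvd (by omega)

private lemma v2_pos {m : ℕ} (hm : 1 ≤ m) : 1 ≤ padicValNat 2 (m * (m + 1)) := by
  apply one_le_padicValNat_of_dvd (by positivity)
  rcases Nat.even_or_odd m with h | h
  · exact Dvd.dvd.mul_right h.two_dvd _
  · have := Nat.odd_iff.mp h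
    exact Dvd.dvd.mul_left (⟨(m+1)/2, by omega⟩ : (2:ℕ) ∣ m + 1) _

private lemma v2_two_mul {a : ℕ} (ha : a ≠ 0) :
    padicValNat 2 (2 * a) = padicValNat 2 a + 1 := by
  rw [v2_mul 2 a (by norm_num) ha, padicValNat.self (by norm_num)]
  omega

/-- If m is odd then 2*(collatz m + 1) = 3*(m+1). -/
private lemma collatz_odd {m : ℕ} (h : m % 2 = 1) :
    2 * (collatz m + 1) = 3 * (m + 1) := by
  have : ¬ Even m := by simp [Nat.even_iff]; omega
  simp only [collatz, if_neg this]
  omega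

private lemma collatz_even {m : ℕ} (h : m % 2 = 0) : 2 * collatz m = m := by
  have : Even m := by simp [Nat.even_iff]; omega
  simp only [collatz, if_pos this]
  omega

/-- step lemma, same-parity case -/
private lemma step2 {m : ℕ} (hm : 1 ≤ m)
    (hN : 2 ≤ padicValNat 2 (m * (m + 1))) :
    1 ≤ collatz m ∧ collatz m % 2 = m % 2 ∧
      padicValNat 2 (collatz m * (collatz m + 1)) + 1 = padicValNat 2 (m * (m + 1)) := by
  rcases Nat.even_or_odd m with he | ho
  · -- m even, v2 m ≥ 2
    have hm2 : m % 2 = 0 := Nat.even_iff.mp he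
    have hc : 2 * collatz m = m := collatz_even hm2
    have hv : padicValNat 2 (m * (m+1)) = padicValNat 2 m := by
      rw [v2_mul m (m+1) (by omega) (by omega), v2_odd (by omega : (m+1) % 2 = 1)]
      omega
    have hvm : 2 ≤ padicValNat 2 m := hv ▸ hN
    have hcm0 : collatz m ≠ 0 := by omega
    have hvc : padicValNat 2 (collatz m) + 1 = padicValNat 2 m := by
      have := v2_two_mul hcm0
      rw [hc] at this
      omega
    -- collatz m even since its v2 ≥ 1
    have h1 : 1 ≤ padicValNat 2 (collatz m) := by omega
    have hce : (2:ℕ) ∣ collatz m := by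
      have := (padicValNat_dvd_iff_le hcm0 (n := 1)).mpr h1
      simpa using this
    have hc2 : collatz m % 2 = 0 := by omega
    refine ⟨by omega, by omega, ?_⟩
    rw [v2_mul _ _ hcm0 (by omega), v2_odd (by omega : (collatz m + 1) % 2 = 1), hv]
    omega
  · -- m odd, v2 (m+1) ≥ 2
    have hm2 : m % 2 = 1 := Nat.odd_iff.mp ho
    have hc : 2 * (collatz m + 1) = 3 * (m + 1) := collatz_odd hm2
    have hv : padicValNat 2 (m * (m+1)) = padicValNat 2 (m+1) := by
      rw [v2_mul m (m+1) (by omega) (by omega), v2_odd hm2]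
      omega
    have hvm : 2 ≤ padicValNat 2 (m+1) := hv ▸ hN
    have h3 : padicValNat 2 (3 * (m+1)) = padicValNat 2 (m+1) := by
      rw [v2_mul 3 (m+1) (by norm_num) (by omega), v2_odd (by norm_num : (3:ℕ) % 2 = 1)]
      omega
    have hvc : padicValNat 2 (collatz m + 1) + 1 = padicValNat 2 (m+1) := by
      have := v2_two_mul (a := collatz m + 1) (by omega)
      rw [hc, h3] at this
      omega
    have h1 : 1 ≤ padicValNat 2 (collatz m + 1) := by omega
    have hce : (2:ℕ) ∣ collatz m + 1 := by
      have := (padicValNat_dvd_iff_le (a := collatz m + 1) (by omega) (n := 1)).mpr h1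
      simpa using this
    have hc2 : collatz m % 2 = 1 := by omega
    refine ⟨by omega, by omega, ?_⟩
    rw [v2_mul _ _ (by omega) (by omega), v2_odd hc2, hv]
    omega

/-- step lemma, parity-flip case -/
private lemma step1 {m : ℕ} (hm : 1 ≤ m)
    (hN : padicValNat 2 (m * (m + 1)) = 1) :
    collatz m % 2 ≠ m % 2 := by
  rcases Nat.even_or_odd m with he | ho
  · have hm2 : m % 2 = 0 := Nat.even_iff.mp he
    have hc : 2 * collatz m = m := collatz_even hm2
    have hv : padicValNat 2 m = 1 := by
      rw [v2_mul m (m+1) (by omega) (by omega), v2_odd (by omega : (m+1) % 2 = 1)] at hN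
      omega
    have hvc : padicValNat 2 (collatz m) = 0 := by
      have hcm0 : collatz m ≠ 0 := by omega
      have := v2_two_mul hcm0
      rw [hc, hv] at this; omega
    -- collatz m odd
    have : ¬ (2:ℕ) ∣ collatz m := by
      intro h
      have := one_le_padicValNat_of_dvd (by omega) h
      omega
    omega
  · have hm2 : m % 2 = 1 := Nat.odd_iff.mp ho
    have hc : 2 * (collatz m + 1) = 3 * (m + 1) := collatz_odd hm2
    have hv : padicValNat 2 (m+1) = 1 := by
      rw [v2_mul m (m+1) (by omega) (by omega), v2_odd hm2] at hN
      omega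
    have h3 : padicValNat 2 (3 * (m+1)) = padicValNat 2 (m+1) := by
      rw [v2_mul 3 (m+1) (by norm_num) (by omega), v2_odd (by norm_num : (3:ℕ) % 2 = 1)]
      omega
    have hvc : padicValNat 2 (collatz m + 1) = 0 := by
      have := v2_two_mul (a := collatz m + 1) (by omega)
      rw [hc, h3, hv] at this; omega
    have : ¬ (2:ℕ) ∣ collatz m + 1 := by
      intro h
      have := one_le_padicValNat_of_dvd (by omega) h
      omega
    omega

private lemma aux : ∀ N m, 1 ≤ m → padicValNat 2 (m * (m + 1)) = N →
    (∀ i < N, (collatz^[i] m) % 2 = m % 2) ∧ (collatz^[N] m) % 2 ≠ m % 2 := by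
  intro N
  induction N with
  | zero => intro m hm hN; have := v2_pos hm; omega
  | succ N ih =>
    intro m hm hN
    rcases Nat.eq_zero_or_pos N with rfl | hNpos
    · refine ⟨fun i hi => by interval_cases i; rfl, ?_⟩
      simpa using step1 hm hN
    · obtain ⟨hc1, hcp, hcv⟩ := step2 hm (by omega)
      obtain ⟨h1, h2⟩ := ih (collatz m) hc1 (by omega)
      constructor
      · intro i hi
        match i with
        | 0 => rfl
        | j + 1 =>
          rw [Function.iterate_succ_apply]
          rw [h1 j (by omega)]
          exact hcp
      · rw [Function.iterate_succ_apply, ← hcp]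
        exact h2

theorem first_parity_change (m : ℕ) (hm : 1 ≤ m) :
    (∀ i < padicValNat 2 (m * (m + 1)), (collatz^[i] m) % 2 = m % 2) ∧
      (collatz^[padicValNat 2 (m * (m + 1))] m) % 2 ≠ m % 2 :=
  aux _ m hm rfl
end

section
/- Let B_{l,m} = A_{l,m} / (2^l · (m+l)!/(m−l)!) for 0 ≤ l ≤ m. Then B_{m,m} = 1, B_{m−1,m} = 2m+1, and for 1 ≤ l ≤ m−1 the recurrence B_{l−1,m} = (2m+1)·B_{l,m} − (m−l)(m+l+1)·B_{l+1,m} holds; consequently, B_{l,m} is an odd integer for all 0 ≤ l ≤ m. -/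
open Finset

noncomputable def B (l m : ℕ) : ℚ :=
  A l m / (2 ^ l * (((m + l).factorial : ℚ) / ((m - l).factorial : ℚ)))

/-!
Write `c_k = 2^k C(2(m-k), m-k) C(m+k, k)` and `S_l = ∑_k c_k C(k, l)`, so that
`B_{l,m} = m!/2^m · l!(m-l)!/(m+l)! · S_l`. The three-term recurrence of `S_l` in `l` is found by
creative telescoping: weighted by `c_k`, the combination of `C(k, l-1)`, `C(k, l)`, `C(k, l+1)`
is the `k`-difference of `l (2m+1-2k) c_k C(k, l)`, which only needs the ratio `c_{k+1}/c_k`.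
Rescaling gives the recurrence of `B`. Its coefficient `(m-l)(m+l+1)` is a product of two
integers of opposite parity, so starting from `B_{m,m} = 1` and `B_{m-1,m} = 2m+1` every
`B_{l,m}` is an odd integer, which is nonnegative because `B` is.
-/

open scoped Nat

theorem Nat.cast_choose_succ_right_mul {R : Type*} [CommRing R] (n k : ℕ) :
    (n.choose (k + 1) : R) * (k + 1) = n.choose k * (n - k) := by
  rcases le_or_gt k n with hk | hk
  · have h : ((n.choose (k + 1) * (k + 1) : ℕ) : R) = (n.choose k * (n - k) : ℕ) :=
      congrArg _ (Nat.choose_succ_right_eq n k)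
    push_cast [hk] at h
    exact h
  · simp [Nat.choose_eq_zero_of_lt hk, Nat.choose_eq_zero_of_lt (Nat.lt_succ_of_lt hk)]

noncomputable def coeffA (m k : ℕ) : ℚ := 2 ^ k * (m - k).centralBinom * (m + k).choose k

noncomputable def sumA (l m : ℕ) : ℚ := ∑ k ∈ range (m + 1), coeffA m k * k.choose l

theorem coeffA_succ_mul {m k : ℕ} (hk : k < m) :
    (2 * m - 2 * k - 1) * (k + 1) * coeffA m (k + 1) = (m - k) * (m + k + 1) * coeffA m k := by
  obtain ⟨n, rfl⟩ : ∃ n, m = k + 1 + n := ⟨m - (k + 1), by omega⟩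
  have hc : ((n + 1 : ℕ) : ℚ) * (n + 1).centralBinom
      = (2 * (2 * n + 1) : ℕ) * n.centralBinom := by
    exact_mod_cast Nat.succ_mul_centralBinom_succ n
  have hb : ((2 * k + n + 1 + 1 : ℕ) : ℚ) * (2 * k + n + 1).choose k
      = (2 * k + n + 1 + 1).choose (k + 1) * (k + 1 : ℕ) := by
    exact_mod_cast Nat.add_one_mul_choose_eq (2 * k + n + 1) k
  simp only [coeffA, show k + 1 + n - (k + 1) = n by omega, show k + 1 + n - k = n + 1 by omega,
    show k + 1 + n + (k + 1) = 2 * k + n + 1 + 1 by omega,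
    show k + 1 + n + k = 2 * k + n + 1 by omega]
  push_cast at hc hb ⊢
  linear_combination -(2 : ℚ) ^ k * (2 * k + n + 1 + 1 : ℚ) * (2 * k + n + 1).choose k * hc
    - 2 ^ (k + 1) * (2 * n + 1) * n.centralBinom * hb

/-- Zeilberger certificate for the three-term recurrence of `sumA` in `l`. -/
noncomputable def certificate (j m k : ℕ) : ℚ :=
  (j + 1) * (2 * m + 1 - 2 * k) * coeffA m k * k.choose (j + 1)

theorem certificate_succ_sub {j m k : ℕ} (hk : k < m) :
    certificate j m (k + 1) - certificate j m k
      = (m - j) * (m + j + 1) * coeffA m k * k.choose j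
        - (2 * m + 1) * (j + 1) * coeffA m k * k.choose (j + 1)
        + (j + 1) * (j + 2) * coeffA m k * k.choose (j + 2) := by
  have hratio := coeffA_succ_mul hk
  have a1 : ((k + 1 : ℕ) : ℚ) * k.choose j = (k + 1).choose (j + 1) * (j + 1 : ℕ) := by
    exact_mod_cast Nat.add_one_mul_choose_eq k j
  have e1 := Nat.cast_choose_succ_right_mul (R := ℚ) k j
  have e2 : (k.choose (j + 2) : ℚ) * (j + 2) = k.choose (j + 1) * (k - (j + 1)) := by
    simpa [add_assoc, one_add_one_eq_two] using Nat.cast_choose_succ_right_mul (R := ℚ) k (j + 1)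
  unfold certificate
  push_cast at a1 ⊢
  linear_combination (-(2 * m - 1 - 2 * k : ℚ) * coeffA m (k + 1)) * a1
    + (k.choose j : ℚ) * hratio + (k + j + 1 : ℚ) * coeffA m k * e1
    - (j + 1 : ℚ) * coeffA m k * e2

theorem sumA_recurrence (j m : ℕ) :
    (m - j) * (m + j + 1) * sumA j m
      = (j + 1) * ((2 * m + 1) * sumA (j + 1) m - (j + 2) * sumA (j + 2) m) := by
  have e1 := Nat.cast_choose_succ_right_mul (R := ℚ) m j
  have e2 : (m.choose (j + 2) : ℚ) * (j + 2) = m.choose (j + 1) * (m - (j + 1)) := by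
    simpa [add_assoc, one_add_one_eq_two] using Nat.cast_choose_succ_right_mul (R := ℚ) m (j + 1)
  have hsum : ∑ k ∈ range (m + 1), ((m - j) * (m + j + 1) * coeffA m k * k.choose j
        - (2 * m + 1) * (j + 1) * coeffA m k * k.choose (j + 1)
        + (j + 1) * (j + 2) * coeffA m k * k.choose (j + 2)) = 0 := by
    rw [sum_range_succ, ← sum_congr rfl fun k hk => certificate_succ_sub (mem_range.1 hk),
      sum_range_sub]
    simp only [certificate, Nat.choose_zero_succ, Nat.cast_zero, mul_zero, sub_zero]
    linear_combination -(m + j + 1 : ℚ) * coeffA m m * e1 + (j + 1 : ℚ) * coeffA m m * e2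
  rw [← sub_eq_zero, ← hsum]
  simp only [sumA, mul_sum, ← sum_sub_distrib]
  exact sum_congr rfl fun k _ => by ring

theorem sum_Icc_eq_sumA (l m : ℕ) :
    ∑ k ∈ Icc l m,
      (2 : ℚ) ^ k * ((2 * m - 2 * k).choose (m - k)) * ((m + k).choose m) * (k.choose l)
      = sumA l m := by
  have hterm : ∀ k ∈ Icc l m,
      (2 : ℚ) ^ k * ((2 * m - 2 * k).choose (m - k)) * ((m + k).choose m) * (k.choose l)
        = coeffA m k * k.choose l := by
    intro k hk
    rw [coeffA, Nat.centralBinom_eq_two_mul_choose, Nat.mul_sub, Nat.choose_symm_add]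
  rw [sum_congr rfl hterm, sumA]
  refine sum_subset (fun k hk => by simp only [mem_Icc, mem_range] at hk ⊢; omega) ?_
  intro k hkm hk
  simp only [mem_Icc, mem_range] at hkm hk
  rw [Nat.choose_eq_zero_of_lt (by omega), Nat.cast_zero, mul_zero]

noncomputable def weight (l m : ℕ) : ℚ := l ! * (m - l)! / (m + l)!

theorem B_eq_weight_mul_sumA {l m : ℕ} (h : l ≤ m) :
    B l m = m ! / 2 ^ m * weight l m * sumA l m := by
  have hpow : (2 : ℚ) ^ (m - l) * 2 ^ l = 2 ^ m := by rw [← pow_add, Nat.sub_add_cancel h]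
  rw [B, A, sum_Icc_eq_sumA, weight, ← hpow]
  push_cast
  field_simp

theorem weight_succ {j m : ℕ} (h : j < m) :
    (m - j) * (m + j + 1) * weight (j + 1) m = (j + 1) * weight j m := by
  obtain ⟨n, rfl⟩ : ∃ n, m = j + 1 + n := ⟨m - (j + 1), by omega⟩
  rw [weight, weight, show j + 1 + n - (j + 1) = n by omega, show j + 1 + n - j = n + 1 by omega,
    show j + 1 + n + (j + 1) = (j + 1 + n + j) + 1 by omega, Nat.factorial_succ (j + 1 + n + j),
    Nat.factorial_succ j, Nat.factorial_succ n]
  push_cast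
  field_simp
  ring

theorem sumA_eq_zero_of_lt {l m : ℕ} (h : m < l) : sumA l m = 0 :=
  sum_eq_zero fun k hk => by
    rw [Nat.choose_eq_zero_of_lt (by simp only [mem_range] at hk; omega), Nat.cast_zero, mul_zero]

theorem sumA_self (m : ℕ) : sumA m m = coeffA m m := by
  rw [sumA, sum_range_succ, sum_eq_zero, Nat.choose_self, Nat.cast_one, mul_one, zero_add]
  intro k hk
  rw [Nat.choose_eq_zero_of_lt (mem_range.1 hk), Nat.cast_zero, mul_zero]

theorem B_self (m : ℕ) : B m m = 1 := by
  have hc : (((m + m).choose m * m ! * m ! : ℕ) : ℚ) = (m + m)! :=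
    congrArg _ (Nat.add_choose_mul_factorial_mul_factorial m m)
  rw [B_eq_weight_mul_sumA le_rfl, sumA_self, weight, coeffA, Nat.sub_self, Nat.centralBinom_zero]
  push_cast at hc ⊢
  field_simp
  linear_combination hc

theorem B_recurrence {l m : ℕ} (hl : 1 ≤ l) (hlm : l ≤ m) :
    B (l - 1) m = (2 * m + 1) * B l m - ((m : ℚ) - l) * (m + l + 1) * B (l + 1) m := by
  obtain ⟨j, rfl⟩ : ∃ j, l = j + 1 := ⟨l - 1, by omega⟩
  set K : ℚ := m ! / 2 ^ m
  have hS := sumA_recurrence j m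
  have hw := weight_succ (show j < m by omega)
  have htail : ((m : ℚ) - (j + 1 : ℕ)) * (m + (j + 1 : ℕ) + 1) * B (j + 1 + 1) m
      = (j + 2) * K * weight (j + 1) m * sumA (j + 2) m := by
    rcases (show j + 1 < m ∨ j + 1 = m by omega) with hlt | rfl
    · rw [B_eq_weight_mul_sumA (show j + 1 + 1 ≤ m by omega)]
      have hw' := weight_succ hlt
      push_cast at hw' ⊢
      linear_combination K * sumA (j + 2) m * hw'
    · -- `B (m + 1) m` is junk, but its coefficient vanishes, and so does `sumA (m + 1) m`
      rw [sumA_eq_zero_of_lt (by omega)]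
      simp
  have hne : ((m : ℚ) - j) * (m + j + 1) ≠ 0 :=
    mul_ne_zero (sub_ne_zero.2 (by exact_mod_cast (show j < m by omega).ne')) (by positivity)
  rw [Nat.add_sub_cancel, htail, B_eq_weight_mul_sumA (show j ≤ m by omega),
    B_eq_weight_mul_sumA hlm]
  apply mul_left_cancel₀ hne
  linear_combination K * weight j m * hS
    - K * ((2 * m + 1) * sumA (j + 1) m - (j + 2) * sumA (j + 2) m) * hw

theorem B_pred_self {m : ℕ} (hm : 1 ≤ m) : B (m - 1) m = 2 * m + 1 := by
  rw [B_recurrence hm le_rfl, B_self, sub_self, zero_mul, zero_mul, sub_zero, mul_one]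

theorem B_nonneg (l m : ℕ) : 0 ≤ B l m := by
  unfold B A
  positivity

theorem exists_odd_int_eq_B (m : ℕ) : ∀ i ≤ m, ∃ b : ℤ, Odd b ∧ B (m - i) m = b := by
  intro i
  induction i using Nat.twoStepInduction with
  | zero => exact fun _ => ⟨1, odd_one, by simp [B_self]⟩
  | one => exact fun hm => ⟨2 * m + 1, odd_two_mul_add_one _, by simp [B_pred_self hm]⟩
  | more i ih0 ih1 =>
    intro hi
    obtain ⟨b0, hb0, e0⟩ := ih0 (by omega)
    obtain ⟨b1, hb1, e1⟩ := ih1 (by omega)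
    have hrec := B_recurrence (l := m - (i + 1)) (m := m) (by omega) (by omega)
    rw [show m - (i + 1) - 1 = m - (i + 2) by omega, show m - (i + 1) + 1 = m - i by omega,
      Nat.cast_sub (by omega : i + 1 ≤ m), e0, e1] at hrec
    have heven : Even (((i : ℤ) + 1) * (2 * m - i)) := by
      rw [show ((i : ℤ) + 1) * (2 * m - i) = 2 * (m * (i + 1)) - i * (i + 1) by ring]
      exact (even_two_mul _).sub (Int.even_mul_succ_self i)
    refine ⟨(2 * m + 1) * b1 - (i + 1) * (2 * m - i) * b0,
      ((odd_two_mul_add_one (m : ℤ)).mul hb1).sub_even (heven.mul_right b0), ?_⟩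
    rw [hrec]
    push_cast
    ring

theorem B_properties (m : ℕ) :
    B m m = 1 ∧
    (1 ≤ m → B (m - 1) m = 2 * m + 1) ∧
    (∀ l : ℕ, 1 ≤ l → l ≤ m - 1 →
      B (l - 1) m = (2 * m + 1) * B l m - ((m : ℚ) - l) * (m + l + 1) * B (l + 1) m) ∧
    (∀ l ≤ m, ∃ b : ℕ, Odd b ∧ B l m = b) := by
  refine ⟨B_self m, B_pred_self, fun l hl hlm => B_recurrence hl (by omega), fun l hl => ?_⟩
  obtain ⟨b, hb, hBb⟩ := exists_odd_int_eq_B m (m - l) (Nat.sub_le m l)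
  rw [Nat.sub_sub_self hl] at hBb
  have hb0 : 0 ≤ b := by exact_mod_cast hBb ▸ B_nonneg l m
  lift b to ℕ using hb0
  exact ⟨b, by exact_mod_cast hb, by exact_mod_cast hBb⟩
end
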